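/- arXiv:math-ph/0505049 — 3 statements merged into one kernel-verified Lean document; each statement's English description precedes it below -/
import Mathlib

section
/- (Minlos/Mecke-type combinatorial lemma for Lebesgue–Poisson measure) For all non-negative measurable functions G : Γ₀ → ℝ and H : Γ₀ × Γ₀ → ℝ, one has ∫_{Γ₀} ∫_{Γ₀} G(η ∪ ξ) H(ξ, η) dλ_σ(η) dλ_σ(ξ) = ∫_{Γ₀} G(η) Σ_{ξ ⊆ η} H(ξ, η \ ξ) dλ_σ(η). -/
open MeasureTheory ENNReal

/-- The Lebesgue–Poisson integral `∫_{Γ₀} G dλ_σ = Σₙ (1/n!) ∫_{Xⁿ} G({x₁,…,xₙ}) dσ^{⊗n}`,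
with finite configurations modelled as finite multisets. -/
noncomputable def lebesguePoissonLIntegral {X : Type*} [MeasurableSpace X] (σ : Measure X)
    (G : Multiset X → ℝ≥0∞) : ℝ≥0∞ :=
  ∑' n : ℕ, (n.factorial : ℝ≥0∞)⁻¹ *
    ∫⁻ x : Fin n → X, G ↑(List.ofFn x) ∂(Measure.pi fun _ => σ)

/-! Both sides expand into series of integrals over tuples. The `(m, n)`-term of the left side is
`(m! n!)⁻¹` times the integral of `G(ξ + η) H(ξ, η)` over `Xᵐ × Xⁿ`. In the `N`-th term of the right
side, the sub-configurations of `{x₁, …, x_N}` are the restrictions of `x` to the `2ᴺ` subsets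
`T ⊆ Fin N`; as `σ^{⊗N}` is invariant under relabelling coordinates, each of the `C(N, m)` subsets
with `#T = m` contributes the same `(m, N - m)`-integral, and `C(N, m) / N! = 1 / (m! (N - m)!)`.
Summing along antidiagonals turns the right side into the double series of the left side. -/

section

open Finset

theorem ENNReal.tsum_sum_antidiagonal {A : Type*} [AddCommMonoid A] [HasAntidiagonal A]
    (f : A × A → ℝ≥0∞) : ∑' n, ∑ p ∈ antidiagonal n, f p = ∑' p, f p := by
  rw [← HasAntidiagonal.sigmaAntidiagonalEquivProd.tsum_eq, ENNReal.tsum_sigma']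
  congr 1 with n
  exact (Finset.tsum_subtype (antidiagonal n) f).symm

theorem ENNReal.inv_factorial_mul_choose {N k : ℕ} (hk : k ≤ N) :
    (N.factorial : ℝ≥0∞)⁻¹ * N.choose k
      = (k.factorial : ℝ≥0∞)⁻¹ * ((N - k).factorial : ℝ≥0∞)⁻¹ := by
  have hC : (N.choose k : ℝ≥0∞) ≠ 0 := by exact_mod_cast (Nat.choose_pos hk).ne'
  rw [← Nat.choose_mul_factorial_mul_factorial hk, Nat.cast_mul, Nat.cast_mul,
    ENNReal.mul_inv (by simp) (Or.inr (by simp [Nat.factorial_ne_zero])),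
    ENNReal.mul_inv (by simp) (by simp), mul_right_comm,
    mul_right_comm _ _ (N.choose k : ℝ≥0∞), ENNReal.inv_mul_cancel hC (by simp), one_mul]

theorem Multiset.antidiagonal_map {α β : Type*} (f : α → β) (s : Multiset α) :
    (s.map f).antidiagonal = s.antidiagonal.map (Prod.map (map f) (map f)) := by
  induction s using Multiset.induction_on with
  | empty => simp
  | cons a s ih => simp [antidiagonal_cons, ih, Multiset.map_map, Prod.map]

theorem Finset.sum_map_val_powerset {α M : Type*} [AddCommMonoid M] (s : Finset α)
    (g : Multiset α → M) : (s.val.powerset.map g).sum = ∑ T ∈ s.powerset, g T.val := by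
  simp [Finset.sum, Finset.powerset, Multiset.map_pmap, Multiset.pmap_eq_map]

theorem Finset.sum_antidiagonal_map_univ_val {ι α M : Type*} [Fintype ι] [DecidableEq ι]
    [AddCommMonoid M] (x : ι → α) (F : Multiset α → Multiset α → M) :
    ((univ.val.map x).antidiagonal.map fun p => F p.1 p.2).sum
      = ∑ T : Finset ι, F (T.val.map x) (Tᶜ.val.map x) := by
  rw [← Multiset.map_swap_antidiagonal, Multiset.antidiagonal_map,
    Multiset.antidiagonal_eq_map_powerset]
  simp only [Multiset.map_map, Function.comp_def, Prod.swap, Prod.map]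
  rw [Finset.sum_map_val_powerset, Finset.powerset_univ]
  simp [← Finset.sdiff_val, ← Finset.compl_eq_univ_sdiff]

theorem Finset.univ_val_map_eq_add {ι κ α β : Type*} [Fintype ι] [Fintype κ] [Fintype α]
    (e : ι ⊕ κ ≃ α) (x : α → β) :
    univ.val.map x
      = univ.val.map (fun i => x (e (.inl i))) + univ.val.map (fun j => x (e (.inr j))) := by
  have huniv : (univ : Finset α).val = (univ.val.map Sum.inl + univ.val.map Sum.inr).map e := by
    rw [← Finset.map_univ_equiv e, Finset.map_val, ← univ_disjSum_univ]
    rfl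
  rw [huniv, Multiset.map_map, Multiset.map_add, Multiset.map_map, Multiset.map_map]
  rfl

theorem Finset.val_map_eq_ofFn_orderEmbOfFin {α β : Type*} [LinearOrder α] {k : ℕ} (T : Finset α)
    (h : #T = k) (x : α → β) :
    T.val.map x = ↑(List.ofFn fun i => x (T.orderEmbOfFin h i)) := by
  conv_lhs => rw [← T.map_orderEmbOfFin_univ h]
  rw [Finset.map_val, Multiset.map_map, Fin.univ_val_map]
  rfl

section PiSplit

variable {X ι κ α : Type*} [MeasurableSpace X]

def MeasurableEquiv.piSplit (e : ι ⊕ κ ≃ α) : (α → X) ≃ᵐ (ι → X) × (κ → X) :=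
  (MeasurableEquiv.piCongrLeft (fun _ => X) e).symm.trans
    (MeasurableEquiv.sumPiEquivProdPi fun _ => X)

@[simp]
theorem MeasurableEquiv.piSplit_apply (e : ι ⊕ κ ≃ α) (x : α → X) :
    MeasurableEquiv.piSplit e x = (fun i => x (e (.inl i)), fun j => x (e (.inr j))) :=
  rfl

theorem MeasureTheory.measurePreserving_piSplit [Fintype ι] [Fintype κ] [Fintype α]
    (μ : Measure X) [SigmaFinite μ] (e : ι ⊕ κ ≃ α) :
    MeasurePreserving (MeasurableEquiv.piSplit e) (Measure.pi fun _ => μ)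
      ((Measure.pi fun _ => μ).prod (Measure.pi fun _ => μ)) :=
  (measurePreserving_sumPiEquivProdPi fun _ => μ).comp
    (measurePreserving_piCongrLeft (fun _ => μ) e).symm

end PiSplit

namespace LebesguePoisson

variable {X : Type*} [MeasurableSpace X] (σ : Measure X) [SigmaFinite σ]
  (G : Multiset X → ℝ≥0∞) (H : Multiset X → Multiset X → ℝ≥0∞)

noncomputable def pairIntegrand (m n : ℕ) (p : (Fin m → X) × (Fin n → X)) : ℝ≥0∞ :=
  G (↑(List.ofFn p.2) + ↑(List.ofFn p.1)) * H ↑(List.ofFn p.1) ↑(List.ofFn p.2)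

noncomputable def pairLIntegral (m n : ℕ) : ℝ≥0∞ :=
  ∫⁻ p, pairIntegrand G H m n p ∂((Measure.pi fun _ => σ).prod (Measure.pi fun _ => σ))

theorem pairIntegrand_piSplit {m n N : ℕ} (e : Fin m ⊕ Fin n ≃ Fin N) (x : Fin N → X) :
    pairIntegrand G H m n (MeasurableEquiv.piSplit e x)
      = G ↑(List.ofFn x) * H ↑(List.ofFn (MeasurableEquiv.piSplit e x).1)
          ↑(List.ofFn (MeasurableEquiv.piSplit e x).2) := by
  rw [pairIntegrand, ← Fin.univ_val_map x, Finset.univ_val_map_eq_add e x, add_comm]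
  simp

theorem measurable_pairIntegrand
    (hG : ∀ n : ℕ, Measurable fun x : Fin n → X => G ↑(List.ofFn x))
    (hH : ∀ n m : ℕ, Measurable fun p : (Fin n → X) × (Fin m → X) =>
        H ↑(List.ofFn p.1) ↑(List.ofFn p.2)) (m n : ℕ) :
    Measurable (pairIntegrand G H m n) := by
  let e : (Fin (m + n) → X) ≃ᵐ _ := MeasurableEquiv.piSplit finSumFinEquiv
  have h : pairIntegrand G H m n = (fun x => G ↑(List.ofFn x) *
      H ↑(List.ofFn (e x).1) ↑(List.ofFn (e x).2)) ∘ e.symm := by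
    ext p
    simpa only [e, MeasurableEquiv.apply_symm_apply, Function.comp_apply]
      using pairIntegrand_piSplit G H finSumFinEquiv (e.symm p)
  rw [h]
  exact ((hG _).mul ((hH m n).comp e.measurable)).comp e.symm.measurable

theorem pairIntegrand_piSplit_finSumEquivOfFinset {N : ℕ} (T : Finset (Fin N))
    (hc : #Tᶜ = N - #T) (x : Fin N → X) :
    pairIntegrand G H #T (N - #T) (MeasurableEquiv.piSplit (finSumEquivOfFinset rfl hc) x)
      = G ↑(List.ofFn x) * H (T.val.map x) (Tᶜ.val.map x) := by
  rw [pairIntegrand_piSplit]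
  simp only [MeasurableEquiv.piSplit_apply, finSumEquivOfFinset_inl, finSumEquivOfFinset_inr,
    ← T.val_map_eq_ofFn_orderEmbOfFin, ← Tᶜ.val_map_eq_ofFn_orderEmbOfFin]

theorem lintegral_mul_sum_antidiagonal
    (hG : ∀ n : ℕ, Measurable fun x : Fin n → X => G ↑(List.ofFn x))
    (hH : ∀ n m : ℕ, Measurable fun p : (Fin n → X) × (Fin m → X) =>
        H ↑(List.ofFn p.1) ↑(List.ofFn p.2)) (N : ℕ) :
    ∫⁻ x : Fin N → X, G ↑(List.ofFn x) *
        ((↑(List.ofFn x) : Multiset X).antidiagonal.map fun p => H p.1 p.2).sum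
        ∂(Measure.pi fun _ => σ)
      = ∑ k ∈ range (N + 1), N.choose k * pairLIntegral σ G H k (N - k) := by
  have hc (T : Finset (Fin N)) : #Tᶜ = N - #T := by simp [card_compl]
  let e (T : Finset (Fin N)) := MeasurableEquiv.piSplit (X := X) (finSumEquivOfFinset rfl (hc T))
  calc _ = ∑ T : Finset (Fin N), ∫⁻ x, pairIntegrand G H #T (N - #T) (e T x)
          ∂(Measure.pi fun _ => σ) := by
        rw [← lintegral_finsetSum (f := fun T x => pairIntegrand G H #T (N - #T) (e T x)) _
          fun T _ => (measurable_pairIntegrand G H hG hH _ _).comp (e T).measurable]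
        congr with x
        rw [← Fin.univ_val_map, sum_antidiagonal_map_univ_val, mul_sum]
        simp only [e, Fin.univ_val_map, pairIntegrand_piSplit_finSumEquivOfFinset]
    _ = ∑ T : Finset (Fin N), pairLIntegral σ G H #T (N - #T) := by
        congr with T
        exact (measurePreserving_piSplit σ _).lintegral_comp_emb (e T).measurableEmbedding _
    _ = _ := by
        rw [← powerset_univ]
        exact (sum_powerset_apply_card fun k => pairLIntegral σ G H k (N - k)).trans
          (by simp [nsmul_eq_mul])

theorem lebesguePoissonLIntegral_lebesguePoissonLIntegral
    (hG : ∀ n : ℕ, Measurable fun x : Fin n → X => G ↑(List.ofFn x))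
    (hH : ∀ n m : ℕ, Measurable fun p : (Fin n → X) × (Fin m → X) =>
        H ↑(List.ofFn p.1) ↑(List.ofFn p.2)) :
    lebesguePoissonLIntegral σ
        (fun ξ => lebesguePoissonLIntegral σ (fun η => G (η + ξ) * H ξ η))
      = ∑' m, ∑' n, (m.factorial : ℝ≥0∞)⁻¹ *
          ((n.factorial : ℝ≥0∞)⁻¹ * pairLIntegral σ G H m n) := by
  rw [lebesguePoissonLIntegral]
  congr with m
  have hF n := measurable_pairIntegrand G H hG hH m n
  rw [ENNReal.tsum_mul_left]
  congr 1
  refine (lintegral_tsum fun n => ((hF n).lintegral_prod_right'.const_mul _).aemeasurable).trans ?_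
  congr with n
  rw [lintegral_const_mul _ (hF n).lintegral_prod_right', pairLIntegral,
    lintegral_prod _ (hF n).aemeasurable]

theorem lebesguePoissonLIntegral_mul_sum_antidiagonal
    (hG : ∀ n : ℕ, Measurable fun x : Fin n → X => G ↑(List.ofFn x))
    (hH : ∀ n m : ℕ, Measurable fun p : (Fin n → X) × (Fin m → X) =>
        H ↑(List.ofFn p.1) ↑(List.ofFn p.2)) :
    lebesguePoissonLIntegral σ
        (fun η => G η * ((η.antidiagonal.map fun p => H p.1 p.2).sum))
      = ∑' N, ∑ p ∈ antidiagonal N, (p.1.factorial : ℝ≥0∞)⁻¹ *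
          ((p.2.factorial : ℝ≥0∞)⁻¹ * pairLIntegral σ G H p.1 p.2) := by
  rw [lebesguePoissonLIntegral]
  congr with N
  rw [lintegral_mul_sum_antidiagonal σ G H hG hH, mul_sum,
    Nat.sum_antidiagonal_eq_sum_range_succ fun m n => (m.factorial : ℝ≥0∞)⁻¹ *
      ((n.factorial : ℝ≥0∞)⁻¹ * pairLIntegral σ G H m n)]
  refine sum_congr rfl fun k hk => ?_
  rw [← mul_assoc, ENNReal.inv_factorial_mul_choose (Nat.lt_succ_iff.mp (mem_range.mp hk)),
    mul_assoc]

end LebesguePoisson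

end

/-- Minlos/Mecke-type combinatorial lemma for the Lebesgue–Poisson measure:
`∫∫ G(η ∪ ξ) H(ξ, η) dλ_σ(η) dλ_σ(ξ) = ∫ G(η) Σ_{ξ ⊆ η} H(ξ, η \ ξ) dλ_σ(η)`
for all non-negative measurable `G`, `H`. -/
theorem lebesguePoisson_combinatorial_lemma
    {X : Type*} [MeasurableSpace X] (σ : Measure X) [SigmaFinite σ]
    (G : Multiset X → ℝ≥0∞) (H : Multiset X → Multiset X → ℝ≥0∞)
    (hG : ∀ n : ℕ, Measurable fun x : Fin n → X => G ↑(List.ofFn x))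
    (hH : ∀ n m : ℕ, Measurable fun p : (Fin n → X) × (Fin m → X) =>
        H ↑(List.ofFn p.1) ↑(List.ofFn p.2)) :
    lebesguePoissonLIntegral σ
        (fun ξ => lebesguePoissonLIntegral σ (fun η => G (η + ξ) * H ξ η))
      = lebesguePoissonLIntegral σ
          (fun η => G η * ((η.antidiagonal.map fun p => H p.1 p.2).sum)) := by
  rw [LebesguePoisson.lebesguePoissonLIntegral_lebesguePoissonLIntegral σ G H hG hH,
    LebesguePoisson.lebesguePoissonLIntegral_mul_sum_antidiagonal σ G H hG hH,
    ENNReal.tsum_sum_antidiagonal]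
  exact ENNReal.tsum_prod.symm
end

section
/- Let φ be a positive pair potential on X × X with C(β) := ess sup_x ∫_X |e^{−βφ(x,y)} − 1| dσ(y) < ∞, and define the operator J on Ent_α(L¹(σ)) by (JL)(θ) := ∫_X θ(x) ∫₀¹ L((1+tθ)(e^{−βφ(x,·)} − 1) + tθ) dt dσ(x). Then J is a bounded linear operator on Ent_α(L¹(σ)) with operator norm bound ‖JL‖_α ≤ (e^{αC(β)}/α) ‖L‖_α. -/
/-!
Since `φ ≥ 0`, the factor `e^{-βφ}` lies in `[0, 1]`, so the argument of `L` at time `t` has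
`L¹`-norm at most `C(β) + t‖θ‖₁`. The inner integral is therefore bounded by
`‖L‖_α e^{αC(β)} ∫₀¹ e^{αt‖θ‖₁} dt`, and `‖θ‖₁ ∫₀¹ e^{αt‖θ‖₁} dt = (e^{α‖θ‖₁} - 1)/α ≤ e^{α‖θ‖₁}/α`.
-/

open MeasureTheory ENNReal

/-- `e^{−βφ}` for a potential value `φ ∈ [0,∞]` (with `e^{−β·∞} = 0`). -/
noncomputable def expNegE (β : ℝ) (t : ℝ≥0∞) : ℝ :=
  if t = ∞ then 0 else Real.exp (-(β * t.toReal))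

lemma expNegE_nonneg (β : ℝ) (t : ℝ≥0∞) : 0 ≤ expNegE β t := by
  unfold expNegE
  split_ifs
  exacts [le_rfl, (Real.exp_pos _).le]

lemma expNegE_le_one {β : ℝ} (hβ : 0 ≤ β) (t : ℝ≥0∞) : expNegE β t ≤ 1 := by
  unfold expNegE
  split_ifs
  · exact zero_le_one
  · exact Real.exp_le_one_iff.mpr (neg_nonpos.mpr (mul_nonneg hβ ENNReal.toReal_nonneg))

lemma mul_integral_exp_mul_le {α : ℝ} (hα : 0 < α) (N : ℝ) :
    N * ∫ t in (0:ℝ)..1, Real.exp (α * (N * t)) ≤ Real.exp (α * N) / α := by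
  rw [intervalIntegral.mul_integral_comp_mul_left (f := fun s => Real.exp (α * s)),
    intervalIntegral.integral_comp_mul_left _ hα.ne', integral_exp, smul_eq_mul]
  simp only [mul_zero, mul_one, Real.exp_zero]
  rw [inv_mul_eq_div]
  gcongr
  linarith

lemma norm_one_add_mul_mul_sub_one_add_mul_le {e t : ℝ} (he₀ : 0 ≤ e) (he₁ : e ≤ 1)
    (ht : 0 ≤ t) (z : ℂ) :
    ‖(1 + (t : ℂ) * z) * ((e : ℂ) - 1) + t * z‖ ≤ |e - 1| + t * ‖z‖ := by
  have hrw : (1 + (t : ℂ) * z) * ((e : ℂ) - 1) + t * z = ((e - 1 : ℝ) : ℂ) + t * z * e := by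
    push_cast; ring
  calc ‖(1 + (t : ℂ) * z) * ((e : ℂ) - 1) + t * z‖
      ≤ ‖((e - 1 : ℝ) : ℂ)‖ + ‖(t : ℂ) * z * e‖ := hrw ▸ norm_add_le _ _
    _ = |e - 1| + t * ‖z‖ * e := by
      simp only [norm_mul, Complex.norm_real, Real.norm_eq_abs, abs_of_nonneg ht,
        abs_of_nonneg he₀]
    _ ≤ |e - 1| + t * ‖z‖ := by
      linarith [mul_le_of_le_one_right (by positivity : 0 ≤ t * ‖z‖) he₁]

section
variable {X : Type*} [MeasurableSpace X] {σ : Measure X}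

lemma integrable_one_add_mul_mul_sub_one_add_mul {g : X → ℝ} (hg₀ : ∀ y, 0 ≤ g y)
    (hg₁ : ∀ y, g y ≤ 1) (hg : Integrable (fun y => |g y - 1|) σ) {θ : X → ℂ}
    (hθ : Integrable θ σ) {t : ℝ} (ht : 0 ≤ t) :
    Integrable (fun y => (1 + (t : ℂ) * θ y) * ((g y : ℂ) - 1) + t * θ y) σ := by
  -- `g ≤ 1` gives `g - 1 = -|g - 1|`, so `g - 1` inherits measurability from `|g - 1|`
  have hsub : (fun y => (g y : ℂ) - 1) = fun y => -((|g y - 1| : ℝ) : ℂ) := by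
    ext y
    rw [abs_of_nonpos (by linarith [hg₁ y])]
    push_cast; ring
  have hmeas : AEStronglyMeasurable (fun y => (g y : ℂ) - 1) σ := by
    rw [hsub]
    exact (Complex.continuous_ofReal.comp_aestronglyMeasurable hg.aestronglyMeasurable).neg
  have hθmeas := hθ.aestronglyMeasurable
  exact (hg.add (hθ.norm.const_mul t)).mono' (by fun_prop) (ae_of_all _ fun y =>
    norm_one_add_mul_mul_sub_one_add_mul_le (hg₀ y) (hg₁ y) ht (θ y))

lemma integral_norm_one_add_mul_mul_sub_one_add_mul_le {g : X → ℝ} (hg₀ : ∀ y, 0 ≤ g y)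
    (hg₁ : ∀ y, g y ≤ 1) (hg : Integrable (fun y => |g y - 1|) σ) {θ : X → ℂ}
    (hθ : Integrable θ σ) {t : ℝ} (ht : 0 ≤ t) :
    ∫ y, ‖(1 + (t : ℂ) * θ y) * ((g y : ℂ) - 1) + t * θ y‖ ∂σ
      ≤ (∫ y, |g y - 1| ∂σ) + t * ∫ y, ‖θ y‖ ∂σ := by
  rw [← integral_const_mul, ← integral_add hg (hθ.norm.const_mul t)]
  exact integral_mono (integrable_one_add_mul_mul_sub_one_add_mul hg₀ hg₁ hg hθ ht).norm
    (hg.add (hθ.norm.const_mul t)) fun y =>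
      norm_one_add_mul_mul_sub_one_add_mul_le (hg₀ y) (hg₁ y) ht (θ y)

lemma norm_intervalIntegral_bogoliubov_le {L : (X → ℂ) → ℂ} {M α C : ℝ} (hM : 0 ≤ M)
    (hα : 0 ≤ α) (hL : ∀ θ : X → ℂ, Integrable θ σ → ‖L θ‖ ≤ M * Real.exp (α * ∫ x, ‖θ x‖ ∂σ))
    {g : X → ℝ} (hg₀ : ∀ y, 0 ≤ g y) (hg₁ : ∀ y, g y ≤ 1)
    (hg : Integrable (fun y => |g y - 1|) σ) (hgC : ∫ y, |g y - 1| ∂σ ≤ C)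
    {θ : X → ℂ} (hθ : Integrable θ σ) :
    ‖∫ t in (0:ℝ)..1, L (fun y => (1 + (t : ℂ) * θ y) * ((g y : ℂ) - 1) + t * θ y)‖
      ≤ M * Real.exp (α * C) * ∫ t in (0:ℝ)..1, Real.exp (α * ((∫ x, ‖θ x‖ ∂σ) * t)) := by
  rw [← intervalIntegral.integral_const_mul]
  refine intervalIntegral.norm_integral_le_of_norm_le zero_le_one
    (ae_of_all _ fun t ht => ?_) ((by fun_prop : Continuous _).intervalIntegrable _ _)
  have ht : 0 ≤ t := ht.1.le
  calc _ ≤ M * Real.exp (α * ∫ y, ‖(1 + (t : ℂ) * θ y) * ((g y : ℂ) - 1) + t * θ y‖ ∂σ) :=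
        hL _ (integrable_one_add_mul_mul_sub_one_add_mul hg₀ hg₁ hg hθ ht)
    _ ≤ M * Real.exp (α * (C + t * ∫ x, ‖θ x‖ ∂σ)) := by
        gcongr
        exact (integral_norm_one_add_mul_mul_sub_one_add_mul_le hg₀ hg₁ hg hθ ht).trans
          (by linarith)
    _ = M * Real.exp (α * C) * Real.exp (α * ((∫ x, ‖θ x‖ ∂σ) * t)) := by
        rw [mul_assoc, ← Real.exp_add]
        ring_nf

end

theorem bogoliubov_operator_bounded_general
    {X : Type*} [MeasurableSpace X] (σ : Measure X)
    (β α Cβ M : ℝ) (hβ : 0 < β) (hα : 0 < α) (hM : 0 ≤ M)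
    (φ : X → X → ℝ≥0∞)
    (hC : ∀ᵐ x ∂σ, Integrable (fun y => |expNegE β (φ x y) - 1|) σ ∧
      ∫ y, |expNegE β (φ x y) - 1| ∂σ ≤ Cβ)
    (L : (X → ℂ) → ℂ)
    (hL : ∀ θ : X → ℂ, Integrable θ σ →
      ‖L θ‖ ≤ M * Real.exp (α * ∫ x, ‖θ x‖ ∂σ)) :
    ∀ θ : X → ℂ, Integrable θ σ →
      ‖∫ x, θ x * (∫ t in (0:ℝ)..1,
          L (fun y => (1 + (t : ℂ) * θ y) * ((expNegE β (φ x y) : ℂ) - 1) + (t : ℂ) * θ y)) ∂σ‖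
        ≤ (Real.exp (α * Cβ) / α) * M * Real.exp (α * ∫ x, ‖θ x‖ ∂σ) := by
  intro θ hθ
  set N := ∫ x, ‖θ x‖ ∂σ
  set K := M * Real.exp (α * Cβ) * ∫ t in (0:ℝ)..1, Real.exp (α * (N * t))
  have hinner : ∀ᵐ x ∂σ, ‖∫ t in (0:ℝ)..1,
      L (fun y => (1 + (t : ℂ) * θ y) * ((expNegE β (φ x y) : ℂ) - 1) + (t : ℂ) * θ y)‖ ≤ K := by
    filter_upwards [hC] with x ⟨hint, hCx⟩
    exact norm_intervalIntegral_bogoliubov_le hM hα.le hL (fun _ => expNegE_nonneg β _)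
      (fun _ => expNegE_le_one hβ.le _) hint hCx hθ
  calc _ ≤ ∫ x, K * ‖θ x‖ ∂σ := norm_integral_le_of_norm_le (hθ.norm.const_mul K) <| by
        filter_upwards [hinner] with x hx
        rw [norm_mul, mul_comm]
        exact mul_le_mul_of_nonneg_right hx (norm_nonneg _)
    _ = M * Real.exp (α * Cβ) * (N * ∫ t in (0:ℝ)..1, Real.exp (α * (N * t))) := by
        rw [integral_const_mul]
        ring
    _ ≤ M * Real.exp (α * Cβ) * (Real.exp (α * N) / α) := by
        gcongr
        exact mul_integral_exp_mul_le hα N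
    _ = _ := by ring

/-- For a positive pair potential `φ` with
`C(β) = ess sup_x ∫ |e^{−βφ(x,y)} − 1| dσ(y) < ∞`, the Bogoliubov integral operator
`(JL)(θ) = ∫ θ(x) ∫₀¹ L((1+tθ)(e^{−βφ(x,·)} − 1) + tθ) dt dσ(x)` is bounded on
`Ent_α(L¹(σ))`: `|JL(θ)| ≤ (e^{αC(β)}/α) ‖L‖_α e^{α‖θ‖₁}` for all `θ ∈ L¹(σ)`, i.e.
`‖JL‖_α ≤ (e^{αC(β)}/α) ‖L‖_α`. -/
theorem bogoliubov_operator_bounded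
    {X : Type*} [MeasurableSpace X] (σ : Measure X)
    (β α Cβ M : ℝ) (hβ : 0 < β) (hα : 0 < α) (hM : 0 ≤ M)
    (φ : X → X → ℝ≥0∞) (hφ_sym : ∀ x y, φ x y = φ y x)
    (hφ_meas : Measurable (Function.uncurry φ))
    (hC : ∀ᵐ x ∂σ, Integrable (fun y => |expNegE β (φ x y) - 1|) σ ∧
      ∫ y, |expNegE β (φ x y) - 1| ∂σ ≤ Cβ)
    (L : (X → ℂ) → ℂ)
    (h_ent : ∀ θ₀ θ : X → ℂ, Differentiable ℂ (fun z : ℂ => L (fun x => θ₀ x + z * θ x)))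
    (hL : ∀ θ : X → ℂ, Integrable θ σ →
      ‖L θ‖ ≤ M * Real.exp (α * ∫ x, ‖θ x‖ ∂σ)) :
    ∀ θ : X → ℂ, Integrable θ σ →
      ‖∫ x, θ x * (∫ t in (0:ℝ)..1,
          L (fun y => (1 + (t : ℂ) * θ y) * ((expNegE β (φ x y) : ℂ) - 1) + (t : ℂ) * θ y)) ∂σ‖
        ≤ (Real.exp (α * Cβ) / α) * M * Real.exp (α * ∫ x, ‖θ x‖ ∂σ) :=
  bogoliubov_operator_bounded_general σ β α Cβ M hβ hα hM φ hC L hL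
end

section
/- (Taylor expansion via Lebesgue–Poisson integral) Let A be an entire functional of bounded type on L¹(σ) with variational derivatives (D^{|η|}A)(θ₀; η) ∈ L^∞(Xⁿ, σ^{⊗n}) for η ∈ Γ_X^{(n)}, satisfying ‖(DⁿA)(θ₀;·)‖_∞ ≤ n!(e/r)ⁿ M_r where M_r = sup_{‖θ'‖≤r}|A(θ₀+θ')|. Then for every θ ∈ L¹(σ) with ‖θ‖_{L¹(σ)} < ∞, A(θ₀ + θ) = ∫_{Γ₀} e_λ(θ, η) (D^{|η|}A)(θ₀; η) dλ_σ(η) = Σ_{n=0}^∞ (1/n!) ∫_{Xⁿ} (DⁿA)(θ₀; x₁,...,xₙ) ∏ᵢ θ(xᵢ) dσ^{⊗n}, with the series converging absolutely (choose r > e‖θ‖_{L¹}). -/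
open MeasureTheory

/-!
The function `z ↦ A (θ₀ + z θ)` is entire, so it equals its Taylor series at `0` everywhere, in
particular at `z = 1`; the kernels `Dⁿ` turn the Taylor coefficients into the integrals over `Xⁿ`.
Absolute convergence comes from the Cauchy bound on the kernels: the `n`-th term of the series of
absolute values is at most `M (e ‖θ‖₁ / r)ⁿ`, a convergent geometric series since `r > e ‖θ‖₁`.
-/

section KernelBound

variable {ι X E F : Type*} [Fintype ι] [MeasurableSpace X] [NormedAddCommGroup E]
  [NormedAddCommGroup F] {μ : Measure X} [SigmaFinite μ] {f : (ι → X) → E} {g : X → F} {C : ℝ}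

lemma integrable_norm_mul_prod_norm_of_ae_norm_le
    (hf : AEStronglyMeasurable f (Measure.pi fun _ => μ))
    (hfC : ∀ᵐ x ∂(Measure.pi fun _ => μ), ‖f x‖ ≤ C) (hg : Integrable g μ) :
    Integrable (fun x : ι → X => ‖f x‖ * ∏ i, ‖g (x i)‖) (Measure.pi fun _ => μ) := by
  have hprod : Integrable (fun x : ι → X => ∏ i, ‖g (x i)‖) (Measure.pi fun _ => μ) :=
    Integrable.fintype_prod fun _ => hg.norm
  refine (hprod.const_mul C).mono' (hf.norm.mul hprod.aestronglyMeasurable) ?_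
  filter_upwards [hfC] with x hx
  rw [norm_mul, norm_norm, Real.norm_of_nonneg (by positivity)]
  gcongr

lemma integral_norm_mul_prod_norm_le (hf : AEStronglyMeasurable f (Measure.pi fun _ => μ))
    (hfC : ∀ᵐ x ∂(Measure.pi fun _ => μ), ‖f x‖ ≤ C) (hg : Integrable g μ) :
    ∫ x : ι → X, ‖f x‖ * ∏ i, ‖g (x i)‖ ∂(Measure.pi fun _ => μ)
      ≤ C * (∫ x, ‖g x‖ ∂μ) ^ Fintype.card ι := by
  have hprod : Integrable (fun x : ι → X => ∏ i, ‖g (x i)‖) (Measure.pi fun _ => μ) :=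
    Integrable.fintype_prod fun _ => hg.norm
  calc ∫ x : ι → X, ‖f x‖ * ∏ i, ‖g (x i)‖ ∂(Measure.pi fun _ => μ)
      ≤ ∫ x : ι → X, C * ∏ i, ‖g (x i)‖ ∂(Measure.pi fun _ => μ) := by
        refine integral_mono_ae (integrable_norm_mul_prod_norm_of_ae_norm_le hf hfC hg)
          (hprod.const_mul C) ?_
        filter_upwards [hfC] with x hx
        gcongr
    _ = C * (∫ x, ‖g x‖ ∂μ) ^ Fintype.card ι := by
        rw [integral_const_mul, integral_fintype_prod_eq_pow (fun x => ‖g x‖)]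

end KernelBound

theorem taylor_expansion_lebesguePoisson_general
    {X : Type*} [MeasurableSpace X] (σ : Measure X) [SigmaFinite σ]
    (A : (X → ℂ) → ℂ) (θ₀ θ : X → ℂ) (hθ : Integrable θ σ)
    (D : (n : ℕ) → (Fin n → X) → ℂ) (hD_meas : ∀ n, Measurable (D n))
    (h_ent : Differentiable ℂ (fun z : ℂ => A (fun x => θ₀ x + z * θ x)))
    (h_rep : ∀ n : ℕ, iteratedDeriv n (fun z : ℂ => A (fun x => θ₀ x + z * θ x)) 0
      = ∫ x : Fin n → X, D n x * ∏ i, θ (x i) ∂(Measure.pi fun _ => σ))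
    (r M : ℝ)
    (hr : Real.exp 1 * ∫ x, ‖θ x‖ ∂σ < r)
    (h_bd : ∀ n : ℕ, ∀ᵐ x ∂(Measure.pi fun _ : Fin n => σ),
      ‖D n x‖ ≤ (n.factorial : ℝ) * (Real.exp 1 / r) ^ n * M) :
    Summable (fun n : ℕ => ((n.factorial : ℝ))⁻¹ *
        ∫ x : Fin n → X, ‖D n x‖ * ∏ i, ‖θ (x i)‖
          ∂(Measure.pi fun _ => σ)) ∧
    A (fun x => θ₀ x + θ x)
      = ∑' n : ℕ, ((n.factorial : ℂ))⁻¹ *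
          ∫ x : Fin n → X, D n x * ∏ i, θ (x i) ∂(Measure.pi fun _ => σ) := by
  refine ⟨?_, ?_⟩
  · set c := ∫ x, ‖θ x‖ ∂σ
    have hc : 0 ≤ c := integral_nonneg fun _ => norm_nonneg _
    have hr0 : 0 < r := lt_of_le_of_lt (by positivity) hr
    have hq : Real.exp 1 * c / r < 1 := (div_lt_one hr0).2 hr
    refine Summable.of_nonneg_of_le (fun n => by positivity) (fun n => ?_)
      ((summable_geometric_of_lt_one (by positivity) hq).mul_left M)
    calc ((n.factorial : ℝ))⁻¹ *
          ∫ x : Fin n → X, ‖D n x‖ * ∏ i, ‖θ (x i)‖ ∂(Measure.pi fun _ => σ)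
        ≤ ((n.factorial : ℝ))⁻¹ * ((n.factorial : ℝ) * (Real.exp 1 / r) ^ n * M * c ^ n) := by
          gcongr
          simpa using integral_norm_mul_prod_norm_le (hD_meas n).aestronglyMeasurable (h_bd n) hθ
      _ = M * (Real.exp 1 * c / r) ^ n := by
          field_simp
          ring
  · have taylor_at_one := Complex.taylorSeries_eq_of_entire' (c := 0) (z := 1) h_ent
    simp only [sub_zero, one_pow, mul_one, h_rep, one_mul] at taylor_at_one
    exact taylor_at_one.symm

/-- Taylor expansion of an entire functional of bounded type on `L¹(σ)` as a
Lebesgue–Poisson integral: with kernels `Dⁿ` representing the differentials at `θ₀` and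
satisfying the Cauchy bound `|Dⁿ| ≤ n!(e/r)ⁿ M` a.e. for some `r > e‖θ‖_{L¹}`,
`A(θ₀+θ) = Σₙ (1/n!) ∫_{Xⁿ} Dⁿ(x) ∏ᵢ θ(xᵢ) dσ^{⊗n}`, with absolute convergence. -/
theorem taylor_expansion_lebesguePoisson
    {X : Type*} [MeasurableSpace X] (σ : Measure X) [SigmaFinite σ]
    (A : (X → ℂ) → ℂ) (θ₀ θ : X → ℂ) (hθ : Integrable θ σ)
    (D : (n : ℕ) → (Fin n → X) → ℂ) (hD_meas : ∀ n, Measurable (D n))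
    (h_ent : Differentiable ℂ (fun z : ℂ => A (fun x => θ₀ x + z * θ x)))
    (h_rep : ∀ n : ℕ, iteratedDeriv n (fun z : ℂ => A (fun x => θ₀ x + z * θ x)) 0
      = ∫ x : Fin n → X, D n x * ∏ i, θ (x i) ∂(Measure.pi fun _ => σ))
    (r M : ℝ) (hM : 0 ≤ M)
    (hr : Real.exp 1 * ∫ x, ‖θ x‖ ∂σ < r)
    (h_bd : ∀ n : ℕ, ∀ᵐ x ∂(Measure.pi fun _ : Fin n => σ),
      ‖D n x‖ ≤ (n.factorial : ℝ) * (Real.exp 1 / r) ^ n * M) :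
    Summable (fun n : ℕ => ((n.factorial : ℝ))⁻¹ *
        ∫ x : Fin n → X, ‖D n x‖ * ∏ i, ‖θ (x i)‖
          ∂(Measure.pi fun _ => σ)) ∧
    A (fun x => θ₀ x + θ x)
      = ∑' n : ℕ, ((n.factorial : ℂ))⁻¹ *
          ∫ x : Fin n → X, D n x * ∏ i, θ (x i) ∂(Measure.pi fun _ => σ) :=
  taylor_expansion_lebesguePoisson_general σ A θ₀ θ hθ D hD_meas h_ent h_rep r M hr h_bd
end
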